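/- Decomposition lemma (uniqueness part): Given a solder 1-form e = e^i X_i and a connection 1-form a = a^i X_i on M×SO(3), the data (f, a, e) with f > 0 is uniquely determined by the 3-form ψ = −f e^{123} + e^1∧a^{23} + e^2∧a^{31} + e^3∧a^{12}; i.e., if (f,a,e) and (f',a',e') both yield the same SO(3)-invariant definite 3-form vanishing along the fibers, then f = f', a = a', e = e'. -/

import Mathlib

/-!
Evaluate `ψ` on triples of vectors. On `(X_{i+1}, X_{i+2}, w)`, with `X_k` the vertical vectors
dual to `a` and killed by `e`, every term of `ψ` but `e^i ∧ a^{i+1,i+2}` vanishes, so `e^i(w)` is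
read off `ψ`. As `e^{123} ≠ 0`, the `e^i` are the coordinate functionals of a horizontal frame `u`;
the values `ψ(X_k, u_m, u_n)` give the off-diagonal entries of the matrix `a^i(u_j)` directly and
its diagonal through the three sums `a^i(u_i) + a^j(u_j)`. Since `a - a'` is horizontal, it is a
combination of the `e^j` with coefficients `(a - a')(u_j)`, so `a` is determined. Finally `ψ`
depends on `f` only through `-f e^{123}`.
-/

noncomputable section

/-- The tangent space at a point of `M × SO(3)`: the first factor is the vertical
(fiber) direction, identified with `so(3) ≅ ℝ³` by the chosen basis `{X₁,X₂,X₃}`,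
the second a complement. -/
abbrev T6 : Type := (Fin 3 → ℝ) × (Fin 3 → ℝ)

open ExteriorAlgebra

/-- `ψ = −f e^{123} + e^1∧a^{23} + e^2∧a^{31} + e^3∧a^{12}` in the exterior algebra of
the dual. -/
def psiOf (f : ℝ) (a e : Fin 3 → Module.Dual ℝ T6) : ExteriorAlgebra ℝ (Module.Dual ℝ T6) :=
  -(f • (ι ℝ (e 0) * ι ℝ (e 1) * ι ℝ (e 2)))
    + ι ℝ (e 0) * ι ℝ (a 1) * ι ℝ (a 2)
    + ι ℝ (e 1) * ι ℝ (a 2) * ι ℝ (a 0)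
    + ι ℝ (e 2) * ι ℝ (a 0) * ι ℝ (a 1)

/-- `a` is a connection form: on the vertical subspace it is the canonical
identification given by the basis of `so(3)`. -/
def IsConn (a : Fin 3 → Module.Dual ℝ T6) : Prop := ∀ i, ∀ x : Fin 3 → ℝ, a i (x, 0) = x i

/-- `e` is a solder form: it is horizontal (vanishes on the vertical subspace) and
`e^{123} ≠ 0`. -/
def IsSolder (e : Fin 3 → Module.Dual ℝ T6) : Prop :=
  (∀ i, ∀ x : Fin 3 → ℝ, e i (x, 0) = 0) ∧ ι ℝ (e 0) * ι ℝ (e 1) * ι ℝ (e 2) ≠ 0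

namespace ExteriorAlgebra

variable {R M : Type*} [CommRing R] [AddCommGroup M] [Module R M]

def formEval {n : ℕ} (v : Fin n → M) : ExteriorAlgebra R (Module.Dual R M) →ₗ[R] R :=
  liftAlternating <| Pi.single (M := fun k => Module.Dual R M [⋀^Fin k]→ₗ[R] R) n <|
    Matrix.detRowAlternating.compLinearMap (LinearMap.pi fun i => LinearMap.applyₗ (v i))

theorem formEval_ιMulti {n : ℕ} (v : Fin n → M) (φ : Fin n → Module.Dual R M) :
    formEval v (ιMulti R n φ) = (Matrix.of fun i j => φ i (v j)).det := by
  rw [formEval, liftAlternating_apply_ιMulti, Pi.single_eq_same]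
  rfl

theorem ι_mul_ι_mul_ι_eq_ιMulti (x y z : M) : ι R x * ι R y * ι R z = ιMulti R 3 ![x, y, z] := by
  simp [ιMulti_apply, mul_assoc]

theorem formEval_ι_mul_ι_mul_ι (v : Fin 3 → M) (p q r : Module.Dual R M) :
    formEval v (ι R p * ι R q * ι R r) = (Matrix.of fun i j => ![p, q, r] i (v j)).det := by
  rw [ι_mul_ι_mul_ι_eq_ιMulti, formEval_ιMulti]

end ExteriorAlgebra

theorem LinearIndependent.exists_basis_coord_eq {K V ι : Type*} [Field K] [AddCommGroup V]
    [Module K V] [FiniteDimensional K V] [Fintype ι] [DecidableEq ι] {ε : ι → Module.Dual K V}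
    (hε : LinearIndependent K ε) (hcard : Fintype.card ι = Module.finrank K V) :
    ∃ U : Module.Basis ι K V, ∀ i, U.coord i = ε i := by
  let B :=
    basisOfLinearIndependentOfCardEqFinrank' ε hε (hcard.trans Subspace.dual_finrank_eq.symm)
  refine ⟨B.dualBasis.map (Module.evalEquiv K V).symm, fun i => LinearMap.ext fun y => ?_⟩
  simp [B]

theorem IsSolder.linearIndependent {e : Fin 3 → Module.Dual ℝ T6} (he : IsSolder e) :
    LinearIndependent ℝ e := by
  by_contra hdep
  apply he.2
  rw [ι_mul_ι_mul_ι_eq_ιMulti,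
    show ![e 0, e 1, e 2] = e from funext fun i => by fin_cases i <;> rfl]
  exact (ιMulti ℝ 3).map_linearDependent e hdep

theorem IsSolder.exists_dual_frame {e : Fin 3 → Module.Dual ℝ T6} (he : IsSolder e) :
    ∃ u : Fin 3 → T6, (∀ i j, e i (u j) = if i = j then 1 else 0) ∧
      ∀ d : Module.Dual ℝ T6, (∀ x, d (x, 0) = 0) → d = ∑ j, d (u j) • e j := by
  have horiz : ∀ d : Module.Dual ℝ T6, (∀ x, d (x, 0) = 0) → ∀ x y, d (x, y) = d (0, y) :=
    fun d hd x y => by simpa [hd] using map_add d (x, 0) (0, y)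
  let ε i := (e i).comp (LinearMap.inr ℝ _ _)
  have hε : LinearIndependent ℝ ε := by
    refine LinearIndependent.of_comp (LinearMap.snd ℝ (Fin 3 → ℝ) (Fin 3 → ℝ)).dualMap ?_
    convert he.linearIndependent
    refine funext fun i => LinearMap.ext fun ⟨x, y⟩ => ?_
    simp [ε, horiz _ (he.1 _) x y]
  obtain ⟨U, hU⟩ := hε.exists_basis_coord_eq (by simp)
  refine ⟨fun j => (0, U j), fun i j => ?_, fun d hd => LinearMap.ext fun ⟨x, y⟩ => ?_⟩
  · simpa [ε, Finsupp.single_apply, eq_comm] using (LinearMap.congr_fun (hU i) (U j)).symm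
  · rw [horiz d hd]
    change (d ∘ₗ LinearMap.inr ℝ _ _) y = _
    conv_lhs => rw [← U.sum_repr y]
    simp [horiz _ (he.1 _) x y, ← U.coord_apply, hU, ε, mul_comm]

def vert (j : Fin 3) : T6 := (Pi.single j 1, 0)

section

variable {f : ℝ} {a e : Fin 3 → Module.Dual ℝ T6}

theorem formEval_vert_vert_psiOf (ha : IsConn a) (he : ∀ i x, e i (x, 0) = 0) (i : Fin 3)
    (w : T6) : formEval ![vert (i + 1), vert (i + 2), w] (psiOf f a e) = e i w := by
  have ha' : ∀ i x, a i (x, 0) = x i := ha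
  fin_cases i <;> simp [psiOf, formEval_ι_mul_ι_mul_ι, Matrix.det_fin_three, vert, ha', he]

theorem formEval_vert_dual_frame_psiOf (ha : IsConn a) (he : ∀ i x, e i (x, 0) = 0)
    {u : Fin 3 → T6} (hu : ∀ i j, e i (u j) = if i = j then 1 else 0) (i : Fin 3) :
    formEval ![vert i, u i, u (i + 1)] (psiOf f a e) = -a (i + 2) (u i) ∧
      formEval ![vert i, u i, u (i + 2)] (psiOf f a e) = a (i + 1) (u i) ∧
      formEval ![vert i, u (i + 1), u (i + 2)] (psiOf f a e) =
        a (i + 1) (u (i + 1)) + a (i + 2) (u (i + 2)) := by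
  have ha' : ∀ i x, a i (x, 0) = x i := ha
  fin_cases i <;>
    simp [psiOf, formEval_ι_mul_ι_mul_ι, Matrix.det_fin_three, vert, ha', he, hu] <;> ring

end

theorem apply_dual_frame_eq_of_psiOf_eq {f f' : ℝ} {a a' e : Fin 3 → Module.Dual ℝ T6}
    (ha : IsConn a) (ha' : IsConn a') (he : ∀ i x, e i (x, 0) = 0) {u : Fin 3 → T6}
    (hu : ∀ i j, e i (u j) = if i = j then 1 else 0) (h : psiOf f a e = psiOf f' a' e)
    (i j : Fin 3) : a i (u j) = a' i (u j) := by
  have hψ k : -a (k + 2) (u k) = -a' (k + 2) (u k) ∧ a (k + 1) (u k) = a' (k + 1) (u k) ∧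
      a (k + 1) (u (k + 1)) + a (k + 2) (u (k + 2)) =
        a' (k + 1) (u (k + 1)) + a' (k + 2) (u (k + 2)) := by
    obtain ⟨h₁, h₂, h₃⟩ := formEval_vert_dual_frame_psiOf (f := f) ha he hu k
    obtain ⟨h₁', h₂', h₃'⟩ := formEval_vert_dual_frame_psiOf (f := f') ha' he hu k
    rw [h] at h₁ h₂ h₃
    exact ⟨h₁.symm.trans h₁', h₂.symm.trans h₂', h₃.symm.trans h₃'⟩
  obtain ⟨h₀₁, h₀₂, h₀₃⟩ := hψ 0
  obtain ⟨h₁₁, h₁₂, h₁₃⟩ := hψ 1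
  obtain ⟨h₂₁, h₂₂, h₂₃⟩ := hψ 2
  simp only [Fin.reduceAdd] at *
  fin_cases i <;> fin_cases j <;> simp only [Fin.reduceFinMk] <;> linarith

theorem psiOf_injective_left {a e : Fin 3 → Module.Dual ℝ T6}
    (he : ι ℝ (e 0) * ι ℝ (e 1) * ι ℝ (e 2) ≠ 0) : Function.Injective fun f => psiOf f a e := by
  intro f f' h
  simp only [psiOf, add_left_inj, neg_inj] at h
  exact smul_left_injective ℝ he h

theorem stmt_9_general (f f' : ℝ)
    (a a' e e' : Fin 3 → Module.Dual ℝ T6)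
    (ha : IsConn a) (ha' : IsConn a') (he : IsSolder e) (he' : IsSolder e')
    (hpsi : psiOf f a e = psiOf f' a' e') :
    f = f' ∧ a = a' ∧ e = e' := by
  obtain rfl : e = e' := funext fun i => LinearMap.ext fun w => by
    rw [← formEval_vert_vert_psiOf ha he.1 i w, hpsi, formEval_vert_vert_psiOf ha' he'.1]
  obtain ⟨u, hu, hspan⟩ := he.exists_dual_frame
  obtain rfl : a = a' := funext fun i => by
    have hvert : ∀ x, (a i - a' i) (x, 0) = 0 := fun x => by simp [ha i x, ha' i x]
    rw [← sub_eq_zero, hspan _ hvert]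
    simp [apply_dual_frame_eq_of_psiOf_eq ha ha' he.1 hu hpsi i]
  exact ⟨psiOf_injective_left he.2 hpsi, rfl, rfl⟩

/-- uniqueness in the decomposition lemma, pointwise form: the data
`(f, a, e)` with `f > 0`, `a` a connection form and `e` a solder form is uniquely
determined by the 3-form `ψ = −f e^{123} + e^1∧a^{23} + e^2∧a^{31} + e^3∧a^{12}`. -/
theorem stmt_9 (f f' : ℝ) (hf : 0 < f) (hf' : 0 < f')
    (a a' e e' : Fin 3 → Module.Dual ℝ T6)
    (ha : IsConn a) (ha' : IsConn a') (he : IsSolder e) (he' : IsSolder e')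
    (hpsi : psiOf f a e = psiOf f' a' e') :
    f = f' ∧ a = a' ∧ e = e' :=
  stmt_9_general f f' a a' e e' ha ha' he he' hpsi

end
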